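/- Let A ∈ ℝ^{m×n} with unit-norm rows, y ∈ ℝ^n, and let s denote the number of zero entries of (Ay − b)^+. For 1 ≤ β ≤ m, ordering the entries of (Ay−b)^+ from smallest to largest as r_{i_0} ≤ r_{i_1} ≤ …, one has (1/C(m,β)) Σ_{j=0}^{m−β} C(β−1+j, β−1) r_{i_j}² ≥ (1/max{m−s, m−β+1}) ‖(Ay−b)^+‖² ≥ (1/m)‖(Ay−b)^+‖². -/
import Mathlib


noncomputable section
open Matrix Finset
open scoped Classical

/-- Positive residual `(aᵢᵀy − bᵢ)⁺` of row `i` of the system `Ax ≤ b` at `y`. -/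
def res {m n : ℕ} (A : Matrix (Fin m) (Fin n) ℝ) (b : Fin m → ℝ) (y : Fin n → ℝ)
    (i : Fin m) : ℝ :=
  max (A.mulVec y i - b i) 0

/-- For `A` with unit-norm rows, `1 ≤ β ≤ m`, with `s` the number of
zero entries of `(Ay − b)⁺` and the entries ordered from smallest to largest via a
sorting bijection `ord` (so `r_{i_j}` is the `(β+j)`-th smallest entry), one has
`(1/C(m,β)) Σ_{j=0}^{m−β} C(β−1+j, β−1) r_{i_j}² ≥ (1/max{m−s, m−β+1})‖(Ay−b)⁺‖²
 ≥ (1/m)‖(Ay−b)⁺‖²`. -/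
theorem stmt15 {m n β : ℕ} (hβ : 1 ≤ β) (hβm : β ≤ m)
    (A : Matrix (Fin m) (Fin n) ℝ) (b : Fin m → ℝ) (y : Fin n → ℝ)
    (hrows : ∀ i, ∑ j, A i j ^ 2 = 1)
    (ord : Fin m ≃ Fin m)
    (hord : ∀ j j' : Fin m, j ≤ j' → res A b y (ord j) ≤ res A b y (ord j')) :
    (1 / ((max (m - (Finset.univ.filter fun i => res A b y i = 0).card)
        (m - β + 1) : ℕ) : ℝ)) * ∑ i, res A b y i ^ 2 ≤
      (1 / (m.choose β : ℝ)) *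
        ∑ j : Fin (m - β + 1), ((β - 1 + j.val).choose (β - 1) : ℝ) *
          res A b y (ord ⟨β - 1 + j.val, by have := j.isLt; omega⟩) ^ 2 ∧
    (1 / (m : ℝ)) * ∑ i, res A b y i ^ 2 ≤
      (1 / ((max (m - (Finset.univ.filter fun i => res A b y i = 0).card)
          (m - β + 1) : ℕ) : ℝ)) * ∑ i, res A b y i ^ 2 := by
  classical
  have hres0 : ∀ i, 0 ≤ res A b y i := fun i => le_max_right _ _
  set s := (Finset.univ.filter fun i => res A b y i = 0).card with hs
  have hsm : s ≤ m := by
    rw [hs]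
    exact (Finset.card_filter_le _ _).trans (by simp)
  set c := min s (β - 1) with hc
  have hcm : c < m := by omega
  have hMdef : max (m - s) (m - β + 1) = m - c := by omega
  have hSnn : 0 ≤ ∑ i, res A b y i ^ 2 := Finset.sum_nonneg fun i _ => sq_nonneg _
  -- positions below `s` carry zero residual
  have hzero : ∀ k : Fin m, k.val < s → res A b y (ord k) = 0 := by
    intro k hk
    by_contra h
    have hpos : 0 < res A b y (ord k) := lt_of_le_of_ne (hres0 _) (Ne.symm h)
    have hsub : (Finset.univ.filter fun i => res A b y i = 0).image ord.symm ⊆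
        Finset.Iio k := by
      intro p hp
      simp only [Finset.mem_image, Finset.mem_filter] at hp
      obtain ⟨i, ⟨-, hi0⟩, rfl⟩ := hp
      rw [Finset.mem_Iio]
      by_contra hle
      push_neg at hle
      have h2 := hord k (ord.symm i) hle
      rw [Equiv.apply_symm_apply, hi0] at h2
      exact absurd (hpos.trans_le h2) (lt_irrefl 0)
    have hks : s ≤ k.val := by
      calc s = ((Finset.univ.filter fun i => res A b y i = 0).image ord.symm).card :=
            (Finset.card_image_of_injective _ ord.symm.injective).symm
        _ ≤ (Finset.Iio k).card := Finset.card_le_card hsub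
        _ = k.val := Fin.card_Iio k
    omega
  set K : Finset (Fin m) := Finset.univ.filter fun k => c ≤ k.val with hK
  set f : Fin m → ℝ := fun k => if β - 1 ≤ k.val then ((k.val.choose (β - 1) : ℕ) : ℝ) else 0
    with hf
  set g : Fin m → ℝ := fun k => res A b y (ord k) ^ 2 with hg
  have hfmono : Monotone f := by
    intro a a' haa'
    simp only [hf]
    by_cases ha : β - 1 ≤ a.val
    · rw [if_pos ha, if_pos (ha.trans haa')]
      exact_mod_cast Nat.choose_le_choose _ haa'
    · rw [if_neg ha]
      split <;> positivity
  have hgmono : Monotone g := by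
    intro a a' haa'
    exact pow_le_pow_left₀ (hres0 _) (hord a a' haa') 2
  have hmono : MonovaryOn f g K := by
    intro i _ j _ hgij
    by_cases hij : i ≤ j
    · exact hfmono hij
    · push_neg at hij
      exact absurd (hgmono hij.le) (not_le.mpr hgij)
  have hcard : K.card = m - c := by
    have : K = Finset.Ici (⟨c, hcm⟩ : Fin m) := by
      ext k
      simp [hK, Finset.mem_Ici, Fin.le_def]
    rw [this, Fin.card_Ici]
  have hcheb := hmono.sum_mul_sum_le_card_mul_sum
  -- sum of weights
  have hsumf : ∑ k ∈ K, f k = (m.choose β : ℝ) := by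
    have h1 : ∑ k ∈ K, f k = ∑ k : Fin m, f k := by
      apply Finset.sum_subset (Finset.subset_univ K)
      intro x _ hx
      simp only [hK, Finset.mem_filter, Finset.mem_univ, true_and, not_le] at hx
      simp only [hf]
      rw [if_neg (by omega)]
    have h2 : ∑ k : Fin m, f k =
        ∑ x ∈ Finset.range m, (if β - 1 ≤ x then ((x.choose (β - 1) : ℕ) : ℝ) else 0) := by
      simp only [hf]
      exact Fin.sum_univ_eq_sum_range (fun x => if β - 1 ≤ x then ((x.choose (β - 1) : ℕ) : ℝ) else 0) m
    have h3 : ∑ x ∈ Finset.range m, (if β - 1 ≤ x then ((x.choose (β - 1) : ℕ) : ℝ) else 0) =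
        ∑ x ∈ Finset.Icc (β - 1) (m - 1), ((x.choose (β - 1) : ℕ) : ℝ) := by
      rw [← Finset.sum_filter]
      apply Finset.sum_congr _ (fun x _ => rfl)
      ext x
      simp only [Finset.mem_filter, Finset.mem_range, Finset.mem_Icc]
      omega
    have h4 : ∑ x ∈ Finset.Icc (β - 1) (m - 1), x.choose (β - 1) = m.choose β := by
      rw [Nat.sum_Icc_choose]
      congr 1 <;> omega
    rw [h1, h2, h3, ← Nat.cast_sum, h4]
  -- sum of residuals over K is the full sum
  have hsumg : ∑ k ∈ K, g k = ∑ i, res A b y i ^ 2 := by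
    have h1 : ∑ k ∈ K, g k = ∑ k : Fin m, g k := by
      apply Finset.sum_subset (Finset.subset_univ K)
      intro x _ hx
      simp only [hK, Finset.mem_filter, Finset.mem_univ, true_and, not_le] at hx
      simp only [hg, hzero x (by omega), ne_eq, OfNat.ofNat_ne_zero, not_false_eq_true,
        zero_pow]
    rw [h1, hg]
    exact Equiv.sum_comp ord (fun i => res A b y i ^ 2)
  -- weighted sum over K equals the target sum
  have hsumfg : ∑ k ∈ K, f k * g k =
      ∑ j : Fin (m - β + 1), ((β - 1 + j.val).choose (β - 1) : ℝ) *
        res A b y (ord ⟨β - 1 + j.val, by have := j.isLt; omega⟩) ^ 2 := by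
    have h1 : ∑ k ∈ K, f k * g k =
        ∑ k ∈ Finset.univ.filter (fun k : Fin m => β - 1 ≤ k.val), f k * g k := by
      symm
      apply Finset.sum_subset
      · intro x hx
        simp only [Finset.mem_filter, Finset.mem_univ, true_and] at hx ⊢
        simp only [hK, Finset.mem_filter, Finset.mem_univ, true_and]
        omega
      · intro x _ hx
        simp only [Finset.mem_filter, Finset.mem_univ, true_and, not_le] at hx
        simp only [hf]
        rw [if_neg (by omega), zero_mul]
    rw [h1]
    refine (Finset.sum_nbij' (i := fun k => (⟨k.val - (β - 1), by have := k.isLt; omega⟩ :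
        Fin (m - β + 1))) (j := fun j => (⟨β - 1 + j.val, by have := j.isLt; omega⟩ : Fin m))
        ?_ ?_ ?_ ?_ ?_)
    · intro a _
      exact Finset.mem_univ _
    · intro a _
      simp only [Finset.mem_filter, Finset.mem_univ, true_and]
      omega
    · intro a ha
      simp only [Finset.mem_filter, Finset.mem_univ, true_and] at ha
      apply Fin.ext
      simp only
      omega
    · intro a _
      apply Fin.ext
      simp only
      omega
    · intro a ha
      simp only [Finset.mem_filter, Finset.mem_univ, true_and] at ha
      simp only [hf, hg, if_pos ha]
      have hval : β - 1 + (a.val - (β - 1)) = a.val := by omega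
      have hfin : (⟨β - 1 + (a.val - (β - 1)), by have := a.isLt; omega⟩ : Fin m) = a :=
        Fin.ext hval
      rw [hfin, hval]
  have hCpos : 0 < m.choose β := Nat.choose_pos hβm
  constructor
  · -- main inequality via Chebyshev
    rw [hsumf, hsumg, hcard, hsumfg] at hcheb
    rw [hMdef]
    have hMR : (0 : ℝ) < ((m - c : ℕ) : ℝ) := by exact_mod_cast Nat.sub_pos_of_lt hcm
    have hCR : (0 : ℝ) < (m.choose β : ℝ) := by exact_mod_cast hCpos
    rw [one_div_mul_eq_div, one_div_mul_eq_div, div_le_div_iff₀ hMR hCR]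
    calc (∑ i, res A b y i ^ 2) * (m.choose β : ℝ)
        = (m.choose β : ℝ) * ∑ i, res A b y i ^ 2 := mul_comm _ _
      _ ≤ ((m - c : ℕ) : ℝ) * ∑ j : Fin (m - β + 1), ((β - 1 + j.val).choose (β - 1) : ℝ) *
            res A b y (ord ⟨β - 1 + j.val, by have := j.isLt; omega⟩) ^ 2 := hcheb
      _ = (∑ j : Fin (m - β + 1), ((β - 1 + j.val).choose (β - 1) : ℝ) *
            res A b y (ord ⟨β - 1 + j.val, by have := j.isLt; omega⟩) ^ 2) *
            ((m - c : ℕ) : ℝ) := mul_comm _ _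
  · -- easy inequality : 1/m ≤ 1/M
    apply mul_le_mul_of_nonneg_right _ hSnn
    apply one_div_le_one_div_of_le
    · rw [hMdef]
      exact_mod_cast Nat.sub_pos_of_lt hcm
    · exact_mod_cast by omega
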